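/- arXiv:1710.09462 — 2 statements merged into one kernel-verified Lean document; each statement's English description precedes it below -/
import Mathlib

section
/- For every integer N ≥ 2, the function P̄(x) = (1-x) · U_*(x)^{N-1} + (x/N) · V_*^{N-1} satisfies P̄(x) ≤ 1/N for all x ∈ [0,1], with equality if and only if x ∈ [0, N/(N+1)]; hence f_* is a symmetric mixed-strategy Nash equilibrium of the N-player elimination game. -/
open Real MeasureTheory

/-- The Nash-equilibrium density of the `N`-player elimination game. -/
noncomputable def fstar (N : ℕ) (x : ℝ) : ℝ :=
  if x ≤ (N:ℝ)/((N:ℝ)+1) then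
    (N:ℝ) ^ (-(2:ℝ)/((N:ℝ)-1)) /
      ((1-x) ^ ((3:ℝ) - ((N:ℝ)-2)/((N:ℝ)-1)) * ((N:ℝ)-x) ^ (((N:ℝ)-2)/((N:ℝ)-1)))
  else 0

/-- `U_*(x) = ∫_0^x (1-s) f_*(s) ds + ∫_0^1 s f_*(s) ds`. -/
noncomputable def Ustar (N : ℕ) (x : ℝ) : ℝ :=
  (∫ s in (0:ℝ)..x, (1-s) * fstar N s) + ∫ s in (0:ℝ)..1, s * fstar N s

/-- `V_* = ∫_0^1 s f_*(s) ds`. -/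
noncomputable def Vstar (N : ℕ) : ℝ := ∫ s in (0:ℝ)..1, s * fstar N s

/-!
Write `r(x) = (N - x) / (N² (1 - x))` and `p = 1 / (N - 1)`. On `[0, N/(N+1)]` the density is
`f_* = r^(p-1) / (N² (1 - s)³)`, and since `r' = (N - 1) / (N² (1 - s)²)` the integrands of
`U_*` and `V_*` have the explicit antiderivatives `r^p` and `r^p (s / (N (1 - s)) - 1)`.
As `r(0) = 1/N` and `r(N/(N+1)) = 1`, this gives `V_* = r(0)^p` and `U_*(x) = r(x)^p` up to
`N/(N+1)`, and `U_* = 1` beyond it, where `f_*` vanishes. Hence `U_*^(N-1) = r`, which is exactly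
the level making `P̄ ≡ 1/N` on `[0, N/(N+1)]`, while beyond it `P̄(x) = 1 - x + x / N²` is
strictly below `1/N`.
-/

open Set

/-- The level of `U_*(x)^(N-1)` solving `(1 - x) y + x / N² = 1 / N`. -/
noncomputable def indifferenceLevel (N : ℕ) (x : ℝ) : ℝ := ((N:ℝ) - x) / ((N:ℝ) ^ 2 * (1 - x))

/-- `P̄(x)`. -/
noncomputable def expectedWinProb (N : ℕ) (x : ℝ) : ℝ :=
  (1 - x) * Ustar N x ^ (N - 1) + x / N * Vstar N ^ (N - 1)

variable {N : ℕ} {s x : ℝ}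

lemma lt_one_of_le_threshold (hs : s ≤ N / (N + 1)) : s < 1 :=
  hs.trans_lt ((div_lt_one (by positivity)).mpr (by linarith))

lemma indifferenceLevel_pos (hN : 1 ≤ N) (hs : s < 1) : 0 < indifferenceLevel N s := by
  have hn : (1:ℝ) ≤ N := by exact_mod_cast hN
  have : 0 < 1 - s := by linarith
  exact div_pos (by linarith) (by positivity)

lemma indifferenceLevel_zero (hN : 0 < N) : indifferenceLevel N 0 = (N:ℝ)⁻¹ := by
  have hn : (0:ℝ) < N := by exact_mod_cast hN
  unfold indifferenceLevel
  field_simp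
  ring

lemma indifferenceLevel_threshold (hN : 0 < N) : indifferenceLevel N (N / (N + 1)) = 1 := by
  have hn : (0:ℝ) < N := by exact_mod_cast hN
  unfold indifferenceLevel
  field_simp
  ring

lemma hasDerivAt_indifferenceLevel (hN : 0 < N) (hs : s ≠ 1) :
    HasDerivAt (indifferenceLevel N) (((N:ℝ) - 1) / ((N:ℝ) ^ 2 * (1 - s) ^ 2)) s := by
  have hn : (0:ℝ) < N := by exact_mod_cast hN
  have h1 : (1:ℝ) - s ≠ 0 := sub_ne_zero.mpr hs.symm
  have hden := ((hasDerivAt_id' s).const_sub 1).const_mul ((N:ℝ) ^ 2)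
  refine (((hasDerivAt_id' s).const_sub (N:ℝ)).div hden (by positivity)).congr_deriv ?_
  field_simp
  ring

lemma hasDerivAt_rpow_indifferenceLevel (hN : 1 < N) (hs : s < 1) :
    HasDerivAt (fun t => indifferenceLevel N t ^ ((N:ℝ) - 1)⁻¹)
      (indifferenceLevel N s ^ (((N:ℝ) - 1)⁻¹ - 1) / ((N:ℝ) ^ 2 * (1 - s) ^ 2)) s := by
  have hn : (1:ℝ) < N := by exact_mod_cast hN
  have : (0:ℝ) < 1 - s := by linarith
  have : (N:ℝ) - 1 ≠ 0 := by linarith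
  refine ((hasDerivAt_indifferenceLevel (by omega) hs.ne).rpow_const
    (Or.inl (indifferenceLevel_pos hN.le hs).ne')).congr_deriv ?_
  field_simp

lemma fstar_eq_of_le (hN : 1 < N) (hs : s ≤ N / (N + 1)) :
    fstar N s = indifferenceLevel N s ^ (((N:ℝ) - 1)⁻¹ - 1) / ((N:ℝ) ^ 2 * (1 - s) ^ 3) := by
  have hn : (1:ℝ) < N := by exact_mod_cast hN
  have hn1 : (N:ℝ) - 1 ≠ 0 := by linarith
  have hA : 0 < 1 - s := by linarith [lt_one_of_le_threshold hs]
  have hB : 0 < (N:ℝ) - s := by linarith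
  rw [fstar, if_pos hs]
  set b : ℝ := ((N:ℝ) - 2) / ((N:ℝ) - 1) with hb_def
  have hb : ((N:ℝ) - 1)⁻¹ - 1 = -b := by
    rw [hb_def]
    field_simp
    ring
  have hC : (N:ℝ) ^ (-(2:ℝ) / ((N:ℝ) - 1)) = (N:ℝ) ^ (2 * b) / (N:ℝ) ^ 2 := by
    rw [← rpow_two (N:ℝ), ← rpow_sub (by linarith), hb_def]
    congr 1
    field_simp
    ring
  have hpow : ((N:ℝ) ^ 2) ^ b = (N:ℝ) ^ (2 * b) := by
    rw [← rpow_natCast_mul (by linarith), Nat.cast_ofNat]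
  rw [hb, hC, rpow_sub hA, rpow_ofNat, indifferenceLevel, rpow_neg (by positivity),
    div_rpow hB.le (by positivity), mul_rpow (by positivity) hA.le, hpow]
  field_simp

lemma hasDerivAt_one_sub_mul_fstar (hN : 1 < N) (hs : s ≤ N / (N + 1)) :
    HasDerivAt (fun t => indifferenceLevel N t ^ ((N:ℝ) - 1)⁻¹) ((1 - s) * fstar N s) s := by
  have hs1 := lt_one_of_le_threshold hs
  have : (1:ℝ) - s ≠ 0 := by linarith
  refine (hasDerivAt_rpow_indifferenceLevel hN hs1).congr_deriv ?_
  rw [fstar_eq_of_le hN hs]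
  field_simp

lemma hasDerivAt_mul_fstar (hN : 1 < N) (hs : s ≤ N / (N + 1)) :
    HasDerivAt (fun t => indifferenceLevel N t ^ ((N:ℝ) - 1)⁻¹ * (t / (N * (1 - t)) - 1))
      (s * fstar N s) s := by
  have hn : (0:ℝ) < N := by positivity
  have hs1 := lt_one_of_le_threshold hs
  have hA : (1:ℝ) - s ≠ 0 := by linarith
  have hr := indifferenceLevel_pos hN.le hs1
  have hden := ((hasDerivAt_id' s).const_sub 1).const_mul (N:ℝ)
  have hfrac := ((hasDerivAt_id' s).div hden (by positivity)).sub_const 1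
  refine ((hasDerivAt_rpow_indifferenceLevel hN hs1).mul hfrac).congr_deriv ?_
  have hsplit : indifferenceLevel N s ^ ((N:ℝ) - 1)⁻¹
      = indifferenceLevel N s ^ (((N:ℝ) - 1)⁻¹ - 1) * indifferenceLevel N s := by
    rw [rpow_sub_one hr.ne', div_mul_cancel₀ _ hr.ne']
  rw [fstar_eq_of_le hN hs, hsplit]
  generalize indifferenceLevel N s ^ (((N:ℝ) - 1)⁻¹ - 1) = R
  simp only [Pi.div_apply, indifferenceLevel]
  field_simp
  ring

lemma continuousOn_fstar (hN : 1 < N) : ContinuousOn (fstar N) (Iic (N / (N + 1))) := by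
  refine ContinuousOn.congr (fun s hs => ?_) (fun s hs => fstar_eq_of_le hN hs)
  have hs1 := lt_one_of_le_threshold hs
  have : (1:ℝ) - s ≠ 0 := by linarith
  refine ContinuousAt.continuousWithinAt ?_
  exact ((hasDerivAt_indifferenceLevel (by omega) hs1.ne).continuousAt.rpow_const
    (Or.inl (indifferenceLevel_pos hN.le hs1).ne')).div (by fun_prop) (by positivity)

lemma integral_mul_fstar_eq_sub {φ F : ℝ → ℝ} (hN : 1 < N) (hφ : Continuous φ)
    (hF : ∀ s : ℝ, s ≤ N / (N + 1) → HasDerivAt F (φ s * fstar N s) s) (hx0 : 0 ≤ x)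
    (hxa : x ≤ N / (N + 1)) :
    ∫ s in 0..x, φ s * fstar N s = F x - F 0 := by
  have hsub : uIcc 0 x ⊆ Iic (N / (N + 1) : ℝ) := by
    rw [uIcc_of_le hx0]
    exact fun s hs => hs.2.trans hxa
  exact intervalIntegral.integral_eq_sub_of_hasDerivAt (fun s hs => hF s (hsub hs))
    (hφ.continuousOn.mul ((continuousOn_fstar hN).mono hsub)).intervalIntegrable

lemma integral_mul_fstar_of_threshold_le (φ : ℝ → ℝ) (hx : N / (N + 1) ≤ x) :
    ∫ s in 0..x, φ s * fstar N s = ∫ s in 0..(N / (N + 1) : ℝ), φ s * fstar N s := by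
  have ha : (0:ℝ) ≤ N / (N + 1) := by positivity
  rw [intervalIntegral.integral_of_le (ha.trans hx), intervalIntegral.integral_of_le ha]
  refine setIntegral_eq_of_subset_of_forall_sdiff_eq_zero measurableSet_Ioc
    (Ioc_subset_Ioc_right hx) fun s hs => ?_
  have has : (N:ℝ) / (N + 1) < s := not_le.mp fun h => hs.2 ⟨hs.1.1, h⟩
  rw [fstar, if_neg has.not_ge, mul_zero]

lemma Vstar_eq (hN : 1 < N) : Vstar N = (N:ℝ)⁻¹ ^ ((N:ℝ) - 1)⁻¹ := by
  have hn : (0:ℝ) < N := by positivity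
  have ha1 : (N:ℝ) / (N + 1) ≤ 1 := (lt_one_of_le_threshold le_rfl).le
  rw [Vstar, integral_mul_fstar_of_threshold_le (fun s => s) ha1,
    integral_mul_fstar_eq_sub hN continuous_id' (fun s hs => hasDerivAt_mul_fstar hN hs)
      (by positivity) le_rfl, indifferenceLevel_threshold (by omega),
    indifferenceLevel_zero (by omega), one_rpow]
  field_simp
  ring

lemma Ustar_eq_of_le (hN : 1 < N) (hx0 : 0 ≤ x) (hxa : x ≤ N / (N + 1)) :
    Ustar N x = indifferenceLevel N x ^ ((N:ℝ) - 1)⁻¹ := by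
  rw [Ustar, ← Vstar, integral_mul_fstar_eq_sub hN (continuous_sub_left 1)
    (fun s hs => hasDerivAt_one_sub_mul_fstar hN hs) hx0 hxa,
    Vstar_eq hN, indifferenceLevel_zero (by omega)]
  ring

lemma Ustar_eq_one_of_threshold_le (hN : 1 < N) (hx : N / (N + 1) ≤ x) : Ustar N x = 1 := by
  rw [Ustar, integral_mul_fstar_of_threshold_le (fun s => 1 - s) hx, ← Ustar,
    Ustar_eq_of_le hN (by positivity) le_rfl, indifferenceLevel_threshold (by omega), one_rpow]

lemma rpow_inv_sub_one_pow (hN : 1 < N) {y : ℝ} (hy : 0 ≤ y) :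
    (y ^ ((N:ℝ) - 1)⁻¹) ^ (N - 1) = y := by
  have h := rpow_inv_natCast_pow hy (n := N - 1) (by omega)
  rwa [Nat.cast_sub hN.le, Nat.cast_one] at h

lemma expectedWinProb_eq_of_le (hN : 1 < N) (hx0 : 0 ≤ x) (hxa : x ≤ N / (N + 1)) :
    expectedWinProb N x = 1 / N := by
  have hn : (0:ℝ) < N := by positivity
  have hx1 := lt_one_of_le_threshold hxa
  have : 1 - x ≠ 0 := by linarith
  rw [expectedWinProb, Ustar_eq_of_le hN hx0 hxa, Vstar_eq hN,
    rpow_inv_sub_one_pow hN (indifferenceLevel_pos hN.le hx1).le,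
    rpow_inv_sub_one_pow hN (by positivity), indifferenceLevel]
  field_simp
  ring

lemma expectedWinProb_lt_of_threshold_lt (hN : 1 < N) (hax : N / (N + 1) < x) :
    expectedWinProb N x < 1 / N := by
  have hn : (1:ℝ) < N := by exact_mod_cast hN
  rw [expectedWinProb, Ustar_eq_one_of_threshold_le hN hax.le, Vstar_eq hN,
    rpow_inv_sub_one_pow hN (by positivity), one_pow, mul_one]
  rw [div_lt_iff₀ (by positivity)] at hax
  have hgap : 0 < ((N:ℝ) - 1) * (x * (N + 1) - N) / (N:ℝ) ^ 2 :=
    div_pos (mul_pos (by linarith) (by linarith)) (by positivity)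
  rw [← sub_pos]
  convert hgap using 1
  field_simp
  ring

/-- the expected winning probability
`P̄(x) = (1-x) U_*(x)^{N-1} + (x/N) V_*^{N-1}` of a player choosing `x` against
`N-1` opponents playing `f_*` satisfies `P̄(x) ≤ 1/N` for all `x ∈ [0,1]`, with
equality if and only if `x ∈ [0, N/(N+1)]`; hence `f_*` is a symmetric
mixed-strategy Nash equilibrium of the `N`-player elimination game. -/
theorem fstar_is_nash_equilibrium (N : ℕ) (hN : 2 ≤ N)
    (x : ℝ) (hx : x ∈ Set.Icc (0:ℝ) 1) :
    (1-x) * (Ustar N x) ^ (N-1) + (x/(N:ℝ)) * (Vstar N) ^ (N-1) ≤ 1/(N:ℝ) ∧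
    ((1-x) * (Ustar N x) ^ (N-1) + (x/(N:ℝ)) * (Vstar N) ^ (N-1) = 1/(N:ℝ)
      ↔ x ∈ Set.Icc (0:ℝ) ((N:ℝ)/((N:ℝ)+1))) := by
  change expectedWinProb N x ≤ _ ∧ (expectedWinProb N x = _ ↔ _)
  rcases le_or_gt x (N / (N + 1)) with hxa | hax
  · have h := expectedWinProb_eq_of_le hN hx.1 hxa
    exact ⟨h.le, iff_of_true h ⟨hx.1, hxa⟩⟩
  · have h := expectedWinProb_lt_of_threshold_lt hN hax
    exact ⟨h.le, iff_of_false h.ne fun hmem => hax.not_ge hmem.2⟩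
end

section
/- For every integer N ≥ 2, the Nash-equilibrium density f_* is differentiable on [0, N/(N+1)) and satisfies there the nonlinear first-order equation [−3 f_*(x) + (1-x) f_*'(x)] · U_*(x) + (N-2)(1-x)^2 f_*(x)^2 = 0. -/
open Real MeasureTheory

/-!
On `[0, a]` the density is the smooth function `F = C (1-x)^(b-3) (N-x)^(-b)`, whose
logarithmic derivative is `(3-b)/(1-x) + b/(N-x)`. Because `(1-b)(N-1) = 1`, the function
`(N-x)(1-x)² F` is an antiderivative of `(1-x) F`, and `((N+1)x/N - 1)(1-x)(N-x) F` is one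
of `x F`; the latter vanishes at `a` and equals `-N F(0)` at `0`. Hence
`U_* = (N-x)(1-x)² F` on `[0, a]`, and the equation becomes an identity of rational
functions in `x`, `F(x)` and `N`.
-/

theorem hasDerivAt_div_rpow_mul_rpow {C c d p q x : ℝ} (hc : x < c) (hd : x < d) :
    HasDerivAt (fun y => C / ((c - y) ^ p * (d - y) ^ q))
      (C / ((c - x) ^ p * (d - x) ^ q) * (p / (c - x) + q / (d - x))) x := by
  have hc' : 0 < c - x := sub_pos.2 hc
  have hd' : 0 < d - x := sub_pos.2 hd
  have hP := ((hasDerivAt_id' x).const_sub c).rpow_const (p := p) (Or.inl hc'.ne')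
  have hQ := ((hasDerivAt_id' x).const_sub d).rpow_const (p := q) (Or.inl hd'.ne')
  have hprod := (hasDerivAt_const x C).fun_div (hP.fun_mul hQ)
    (mul_pos (rpow_pos_of_pos hc' p) (rpow_pos_of_pos hd' q)).ne'
  refine hprod.congr_deriv ?_
  simp only [rpow_sub_one hc'.ne', rpow_sub_one hd'.ne']
  field_simp
  ring

theorem intervalIntegral_eq_of_eq_zero_on_Ioc {f : ℝ → ℝ} {a b c : ℝ} (hbc : b ≤ c)
    (hf : IntervalIntegrable f volume a b) (hzero : ∀ x ∈ Set.Ioc b c, f x = 0) :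
    ∫ x in a..c, f x = ∫ x in a..b, f x := by
  have htail : ∫ x in b..c, f x = 0 := by
    rw [intervalIntegral.integral_of_le hbc]
    exact setIntegral_eq_zero_of_forall_eq_zero hzero
  have htail_int : IntervalIntegrable f volume b c := by
    rw [intervalIntegrable_iff, Set.uIoc_of_le hbc]
    exact integrableOn_zero.congr_fun (fun x hx => (hzero x hx).symm) measurableSet_Ioc
  rw [← intervalIntegral.integral_add_adjacent_intervals hf htail_int, htail, add_zero]

theorem natCast_div_natCast_add_one_lt_one (N : ℕ) : (N:ℝ)/((N:ℝ)+1) < 1 :=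
  (div_lt_one (by positivity)).2 (lt_add_one _)

section

variable {N : ℕ} {x : ℝ}

noncomputable def fstarBranch (N : ℕ) (x : ℝ) : ℝ :=
  (N:ℝ) ^ (-(2:ℝ)/((N:ℝ)-1)) /
    ((1-x) ^ ((3:ℝ) - ((N:ℝ)-2)/((N:ℝ)-1)) * ((N:ℝ)-x) ^ (((N:ℝ)-2)/((N:ℝ)-1)))

theorem fstar_eq_fstarBranch (hx : x ≤ (N:ℝ)/((N:ℝ)+1)) : fstar N x = fstarBranch N x :=
  if_pos hx

theorem fstar_eq_zero_of_lt (hx : (N:ℝ)/((N:ℝ)+1) < x) : fstar N x = 0 := if_neg (not_le.2 hx)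

theorem hasDerivAt_fstarBranch (hN : 1 ≤ N) (hx : x < 1) :
    HasDerivAt (fstarBranch N)
      (fstarBranch N x *
        (((3:ℝ) - ((N:ℝ)-2)/((N:ℝ)-1)) / (1-x) + ((N:ℝ)-2)/((N:ℝ)-1) / ((N:ℝ)-x))) x :=
  hasDerivAt_div_rpow_mul_rpow hx (hx.trans_le (by exact_mod_cast hN))

theorem continuousOn_fstarBranch (hN : 1 ≤ N) : ContinuousOn (fstarBranch N) (Set.Iio 1) :=
  fun _ hy => (hasDerivAt_fstarBranch hN hy).continuousAt.continuousWithinAt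

theorem hasDerivAt_antiderivative_one_sub_mul_fstarBranch (hN : 2 ≤ N) (hx : x < 1) :
    HasDerivAt (fun y => ((N:ℝ) - y) * (1 - y) ^ 2 * fstarBranch N y)
      ((1 - x) * fstarBranch N x) x := by
  have hn : (2:ℝ) ≤ N := by exact_mod_cast hN
  have hid := hasDerivAt_id' x
  have hpoly := (hid.const_sub (N:ℝ)).fun_mul ((hid.const_sub 1).fun_pow 2)
  refine (hpoly.fun_mul (hasDerivAt_fstarBranch (by omega) hx)).congr_deriv ?_
  have h1 : (1:ℝ) - x ≠ 0 := by linarith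
  have hN' : (N:ℝ) - x ≠ 0 := by linarith
  have hN1 : (N:ℝ) - 1 ≠ 0 := by linarith
  field_simp
  ring

theorem hasDerivAt_antiderivative_mul_fstarBranch (hN : 2 ≤ N) (hx : x < 1) :
    HasDerivAt (fun y => (((N:ℝ) + 1) * y / N - 1) * (1 - y) * ((N:ℝ) - y) * fstarBranch N y)
      (x * fstarBranch N x) x := by
  have hn : (2:ℝ) ≤ N := by exact_mod_cast hN
  have hid := hasDerivAt_id' x
  have hpoly := ((((hid.const_mul ((N:ℝ) + 1)).div_const (N:ℝ)).sub_const 1).fun_mul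
    (hid.const_sub 1)).fun_mul (hid.const_sub (N:ℝ))
  refine (hpoly.fun_mul (hasDerivAt_fstarBranch (by omega) hx)).congr_deriv ?_
  have h1 : (1:ℝ) - x ≠ 0 := by linarith
  have hN' : (N:ℝ) - x ≠ 0 := by linarith
  have hN1 : (N:ℝ) - 1 ≠ 0 := by linarith
  have hN0 : (N:ℝ) ≠ 0 := by linarith
  field_simp
  ring

theorem integral_one_sub_mul_fstar (hN : 2 ≤ N) (hx0 : 0 ≤ x)
    (hxa : x ≤ (N:ℝ)/((N:ℝ)+1)) :
    ∫ s in (0:ℝ)..x, (1 - s) * fstar N s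
      = ((N:ℝ) - x) * (1 - x) ^ 2 * fstarBranch N x - N * fstarBranch N 0 := by
  have hx1 : x < 1 := hxa.trans_lt (natCast_div_natCast_add_one_lt_one N)
  have hsub : Set.uIcc 0 x ⊆ Set.Iio 1 := by
    rw [Set.uIcc_of_le hx0]; exact fun s hs => hs.2.trans_lt hx1
  rw [intervalIntegral.integral_congr (g := fun s => (1 - s) * fstarBranch N s) fun s hs => by
    rw [Set.uIcc_of_le hx0] at hs; rw [fstar_eq_fstarBranch (hs.2.trans hxa)]]
  have hFTC := intervalIntegral.integral_eq_sub_of_hasDerivAt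
    (fun s hs => hasDerivAt_antiderivative_one_sub_mul_fstarBranch hN (hsub hs))
    ((continuousOn_const.sub continuousOn_id).mul
      ((continuousOn_fstarBranch (by omega)).mono hsub)).intervalIntegrable
  rw [hFTC]
  simp

theorem integral_mul_fstar (hN : 2 ≤ N) :
    ∫ s in (0:ℝ)..1, s * fstar N s = N * fstarBranch N 0 := by
  set a : ℝ := (N:ℝ)/((N:ℝ)+1)
  have ha0 : 0 ≤ a := by positivity
  have hsub : Set.uIcc 0 a ⊆ Set.Iio 1 := by
    rw [Set.uIcc_of_le ha0]
    exact fun s hs => hs.2.trans_lt (natCast_div_natCast_add_one_lt_one N)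
  have hint : IntervalIntegrable (fun s => s * fstarBranch N s) volume 0 a :=
    (continuousOn_id.mul ((continuousOn_fstarBranch (by omega)).mono hsub)).intervalIntegrable
  have heq : Set.EqOn (fun s => s * fstar N s) (fun s => s * fstarBranch N s) (Set.uIcc 0 a) :=
    fun s hs => by rw [Set.uIcc_of_le ha0] at hs; simp only [fstar_eq_fstarBranch hs.2]
  have htail : ∀ s ∈ Set.Ioc a 1, s * fstar N s = 0 := fun s hs => by
    rw [fstar_eq_zero_of_lt hs.1, mul_zero]
  rw [intervalIntegral_eq_of_eq_zero_on_Ioc (natCast_div_natCast_add_one_lt_one N).le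
      (hint.congr (heq.symm.mono Set.uIoc_subset_uIcc)) htail,
    intervalIntegral.integral_congr heq,
    intervalIntegral.integral_eq_sub_of_hasDerivAt
      (fun s hs => hasDerivAt_antiderivative_mul_fstarBranch hN (hsub hs)) hint]
  have hN0 : (N:ℝ) ≠ 0 := by positivity
  have hroot : ((N:ℝ) + 1) * a / N - 1 = 0 := by simp only [a]; field_simp; ring
  simp [hroot]

theorem Ustar_eq (hN : 2 ≤ N) (hx0 : 0 ≤ x) (hxa : x ≤ (N:ℝ)/((N:ℝ)+1)) :
    Ustar N x = ((N:ℝ) - x) * (1 - x) ^ 2 * fstarBranch N x := by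
  rw [Ustar, integral_one_sub_mul_fstar hN hx0 hxa, integral_mul_fstar hN]
  ring

end

/-- for `N ≥ 2`, the Nash-equilibrium density `f_*` is
differentiable on `[0, N/(N+1))` and satisfies there the nonlinear first-order
equation `( -3 f_*(x) + (1-x) f_*'(x) ) U_*(x) + (N-2)(1-x)² f_*(x)² = 0`. -/
theorem fstar_first_order_ode (N : ℕ) (hN : 2 ≤ N)
    (x : ℝ) (hx : x ∈ Set.Ico (0:ℝ) ((N:ℝ)/((N:ℝ)+1))) :
    DifferentiableAt ℝ (fstar N) x ∧
    (-3 * fstar N x + (1-x) * deriv (fstar N) x) * Ustar N x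
      + ((N:ℝ)-2) * (1-x)^2 * (fstar N x)^2 = 0 := by
  obtain ⟨hx0, hxa⟩ := hx
  have hx1 : x < 1 := hxa.trans (natCast_div_natCast_add_one_lt_one N)
  have hlocal : fstar N =ᶠ[nhds x] fstarBranch N := by
    filter_upwards [Iio_mem_nhds hxa] with y hy using fstar_eq_fstarBranch hy.le
  have hderiv := (hasDerivAt_fstarBranch (by omega) hx1).congr_of_eventuallyEq hlocal
  refine ⟨hderiv.differentiableAt, ?_⟩
  rw [hderiv.deriv, fstar_eq_fstarBranch hxa.le, Ustar_eq hN hx0 hxa.le]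
  have hn : (2:ℝ) ≤ N := by exact_mod_cast hN
  have h1 : (1:ℝ) - x ≠ 0 := by linarith
  have hN' : (N:ℝ) - x ≠ 0 := by linarith
  have hN1 : (N:ℝ) - 1 ≠ 0 := by linarith
  field_simp
  ring
end
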